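/- Define ρ(ε, δ) = [2 log(√δ √(e^ε + δ − 1) + e^{ε/2}) − 2 log(1 − δ)] / [ε − 2 log(1 − δ)]. Then for all ε ≥ 0 and 0 ≤ δ < 1 (not both zero), 1 ≤ ρ(ε, δ) < 2, and both bounds are sharp. -/

import Mathlib

/-! With `x = e^{ε/2}` and `A = √δ √(x² + δ - 1) + x`, the ratio is `log q / log p` for
`p = x / (1 - δ) > 1` and `q = A / (1 - δ)`. Since `A ≥ x` we have `q ≥ p`, giving `ρ ≥ 1`;
the bound `ρ < 2` is `q < p²`, i.e. `A (1 - δ) < x²`, which after squaring is a polynomial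
inequality with nonnegative coefficients in `x - 1` and `δ`. The value `1` is attained at
`δ = 0`, and along `ε = 0` the inequalities `δ / (1 + δ) ≤ log (1 + δ)` and
`-log (1 - δ) ≤ δ / (1 - δ)` give `ρ(0, δ) ≥ 2 / (1 + δ) → 2`. -/

/-- The ratio `ρ(ε, δ)` of the minimal Laplace and Logistic DP scales. -/
noncomputable def scaleRatio (ε δ : ℝ) : ℝ :=
  (2 * Real.log (Real.sqrt δ * Real.sqrt (Real.exp ε + δ - 1) + Real.exp (ε / 2)) -
      2 * Real.log (1 - δ)) /
    (ε - 2 * Real.log (1 - δ))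

open Real

lemma one_le_log_div_log {p q : ℝ} (hp : 1 < p) (hpq : p ≤ q) : 1 ≤ log q / log p := by
  rw [le_div_iff₀ (log_pos hp), one_mul]
  exact log_le_log (by linarith) hpq

lemma log_div_log_lt_two {p q : ℝ} (hp : 1 < p) (hq : 0 < q) (hqp : q < p ^ 2) :
    log q / log p < 2 := by
  rw [div_lt_iff₀ (log_pos hp)]
  calc log q < log (p ^ 2) := log_lt_log hq hqp
    _ = 2 * log p := by rw [log_pow]; norm_num

lemma scaleRatio_eq_log_div_log {ε δ : ℝ} (hδ : δ < 1) :
    scaleRatio ε δ = log ((√δ * √(exp ε + δ - 1) + exp (ε / 2)) / (1 - δ)) /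
      log (exp (ε / 2) / (1 - δ)) := by
  have h1δ : 1 - δ ≠ 0 := (sub_pos.2 hδ).ne'
  have hA : √δ * √(exp ε + δ - 1) + exp (ε / 2) ≠ 0 := by positivity
  rw [scaleRatio, log_div hA h1δ, log_div (exp_pos _).ne' h1δ, log_exp,
    show ε - 2 * log (1 - δ) = 2 * (ε / 2 - log (1 - δ)) by ring, ← mul_sub,
    mul_div_mul_left _ _ two_ne_zero]

lemma mul_sq_one_sub_lt_sq {x δ : ℝ} (hx : 1 ≤ x) (hδ0 : 0 ≤ δ) (hδ1 : δ < 1)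
    (h : 1 < x ∨ 0 < δ) :
    δ * (x ^ 2 + δ - 1) * (1 - δ) ^ 2 < (x * (x + δ - 1)) ^ 2 := by
  obtain ⟨u, hu, rfl⟩ : ∃ u, 0 ≤ u ∧ x = 1 + u := ⟨x - 1, by linarith, by ring⟩
  rw [← sub_pos, show ((1 + u) * ((1 + u) + δ - 1)) ^ 2 - δ * ((1 + u) ^ 2 + δ - 1) * (1 - δ) ^ 2 =
      δ ^ 3 * (2 - δ) + 2 * u * δ ^ 2 * (3 - δ) + u ^ 2 * (1 + 3 * δ + 3 * δ ^ 2 - δ ^ 3) +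
        2 * u ^ 3 * (1 + δ) + u ^ 4 by ring]
  have hcoeff : 0 < 1 + 3 * δ + 3 * δ ^ 2 - δ ^ 3 := by nlinarith [pow_le_one₀ hδ0 hδ1.le (n := 2)]
  have h1 : 0 ≤ δ ^ 3 * (2 - δ) := mul_nonneg (by positivity) (by linarith)
  have h2 : 0 ≤ 2 * u * δ ^ 2 * (3 - δ) := mul_nonneg (by positivity) (by linarith)
  have h3 : 0 ≤ u ^ 2 * (1 + 3 * δ + 3 * δ ^ 2 - δ ^ 3) := mul_nonneg (by positivity) hcoeff.le
  have h4 : 0 ≤ 2 * u ^ 3 * (1 + δ) := by positivity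
  have h5 : 0 ≤ u ^ 4 := by positivity
  rcases h with hx1 | hδ
  · have : 0 < u ^ 2 * (1 + 3 * δ + 3 * δ ^ 2 - δ ^ 3) := mul_pos (pow_pos (by linarith) 2) hcoeff
    linarith
  · have : 0 < δ ^ 3 * (2 - δ) := mul_pos (by positivity) (by linarith)
    linarith

lemma sqrt_mul_sqrt_add_mul_one_sub_lt_sq {x δ : ℝ} (hx : 1 ≤ x) (hδ0 : 0 ≤ δ) (hδ1 : δ < 1)
    (h : 1 < x ∨ 0 < δ) :
    (√δ * √(x ^ 2 + δ - 1) + x) * (1 - δ) < x ^ 2 := by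
  have hsq : (√δ * √(x ^ 2 + δ - 1) * (1 - δ)) ^ 2 = δ * (x ^ 2 + δ - 1) * (1 - δ) ^ 2 := by
    rw [mul_pow, mul_pow, sq_sqrt hδ0, sq_sqrt (by nlinarith)]
  have hlt : √δ * √(x ^ 2 + δ - 1) * (1 - δ) < x * (x + δ - 1) :=
    lt_of_pow_lt_pow_left₀ 2 (by nlinarith) (hsq ▸ mul_sq_one_sub_lt_sq hx hδ0 hδ1 h)
  nlinarith

lemma one_le_scaleRatio_and_scaleRatio_lt_two {ε δ : ℝ} (hε : 0 ≤ ε) (hδ0 : 0 ≤ δ) (hδ1 : δ < 1)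
    (hne : 0 < ε ∨ 0 < δ) : 1 ≤ scaleRatio ε δ ∧ scaleRatio ε δ < 2 := by
  set x := exp (ε / 2)
  have hx : 1 ≤ x := one_le_exp (by linarith)
  have hxδ : 1 < x ∨ 0 < δ := hne.imp_left fun h => one_lt_exp_iff.2 (half_pos h)
  have h1δ : 0 < 1 - δ := by linarith
  have hp : 1 < x / (1 - δ) := by
    rw [one_lt_div h1δ]
    rcases hxδ with h | h <;> linarith
  have hexp : exp ε = x ^ 2 := by rw [← exp_nat_mul]; congr 1; ring
  have hA : x ≤ √δ * √(x ^ 2 + δ - 1) + x := by simp only [le_add_iff_nonneg_left]; positivity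
  rw [scaleRatio_eq_log_div_log hδ1, hexp]
  refine ⟨one_le_log_div_log hp (div_le_div_of_nonneg_right hA h1δ.le),
    log_div_log_lt_two hp (by positivity) ?_⟩
  rw [div_pow, div_lt_div_iff₀ h1δ (by positivity), sq (1 - δ), ← mul_assoc]
  exact mul_lt_mul_of_pos_right (sqrt_mul_sqrt_add_mul_one_sub_lt_sq hx hδ0 hδ1 hxδ) h1δ

lemma two_div_one_add_le_scaleRatio_zero {δ : ℝ} (hδ0 : 0 < δ) (hδ1 : δ < 1) :
    2 / (1 + δ) ≤ scaleRatio 0 δ := by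
  have h1δ : 0 < 1 - δ := by linarith
  have hL : 0 < log (1 / (1 - δ)) := log_pos (by rw [lt_div_iff₀ h1δ]; linarith)
  have hLle : log (1 / (1 - δ)) ≤ δ / (1 - δ) := by
    have := log_le_sub_one_of_pos (one_div_pos.2 h1δ)
    rwa [show 1 / (1 - δ) - 1 = δ / (1 - δ) by field_simp; ring] at this
  have hlog : δ / (1 + δ) ≤ log (1 + δ) := by
    have := one_sub_inv_le_log_of_pos (show 0 < 1 + δ by linarith)
    rwa [show 1 - (1 + δ)⁻¹ = δ / (1 + δ) by field_simp; ring] at this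
  have hnum : (√δ * √(exp 0 + δ - 1) + exp (0 / 2)) / (1 - δ) = (1 + δ) * (1 / (1 - δ)) := by
    rw [zero_div, exp_zero, add_sub_cancel_left, mul_self_sqrt hδ0.le]; ring
  have hden : exp (0 / 2) / (1 - δ) = 1 / (1 - δ) := by rw [zero_div, exp_zero]
  rw [scaleRatio_eq_log_div_log hδ1, hnum, hden, log_mul (by linarith) (by positivity), add_div,
    div_self hL.ne']
  calc 2 / (1 + δ) = δ / (1 + δ) / (δ / (1 - δ)) + 1 := by field_simp; ring
    _ ≤ log (1 + δ) / log (1 / (1 - δ)) + 1 :=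
      add_le_add_left (div_le_div₀ (hlog.trans' (by positivity)) hlog hL hLle) 1

/-- For all `ε ≥ 0`, `0 ≤ δ < 1` (not both zero), `1 ≤ ρ(ε, δ) < 2`,
and both bounds are sharp. -/
theorem rho_bounds :
    (∀ ε δ : ℝ, 0 ≤ ε → 0 ≤ δ → δ < 1 → ¬(ε = 0 ∧ δ = 0) →
        1 ≤ scaleRatio ε δ ∧ scaleRatio ε δ < 2) ∧
      (∃ ε δ : ℝ, 0 ≤ ε ∧ 0 ≤ δ ∧ δ < 1 ∧ ¬(ε = 0 ∧ δ = 0) ∧ scaleRatio ε δ = 1) ∧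
      (∀ c : ℝ, c < 2 → ∃ ε δ : ℝ,
        0 ≤ ε ∧ 0 ≤ δ ∧ δ < 1 ∧ ¬(ε = 0 ∧ δ = 0) ∧ c < scaleRatio ε δ) := by
  refine ⟨fun ε δ hε hδ0 hδ1 hne => ?_, ⟨1, 0, by norm_num, le_rfl, by norm_num, by norm_num, ?_⟩,
    fun c hc => ?_⟩
  · refine one_le_scaleRatio_and_scaleRatio_lt_two hε hδ0 hδ1 ?_
    by_contra! h
    exact hne ⟨le_antisymm h.1 hε, le_antisymm h.2 hδ0⟩
  · simp [scaleRatio]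
  · -- `δ = (2 - c) / (4 - c)` gives `2 / (1 + δ) - c = (2 - c)² / (3 - c) > 0`.
    set δ := (2 - c) / (4 - c)
    have hδ0 : 0 < δ := div_pos (by linarith) (by linarith)
    have hδ1 : δ < 1 := (div_lt_one (by linarith)).2 (by linarith)
    refine ⟨0, δ, le_rfl, hδ0.le, hδ1, fun h => hδ0.ne' h.2, ?_⟩
    refine lt_of_lt_of_le ?_ (two_div_one_add_le_scaleRatio_zero hδ0 hδ1)
    rw [lt_div_iff₀ (by linarith)]
    have hc' : c * (1 + δ) = c * (6 - 2 * c) / (4 - c) := by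
      have : 4 - c ≠ 0 := by linarith
      simp only [δ]; field_simp; ring
    rw [hc', div_lt_iff₀ (by linarith)]
    nlinarith [sq_pos_of_pos (sub_pos.2 hc)]
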